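/- For any square real matrices A, B with A normal ([A,Aᵀ]=0): |[Bᵀ,A]|² = |[B,A]|², and hence |[B,A]|² + ⟨[Bᵀ,A],[B,A]⟩ ≥ 0, with equality if and only if [S(B),A] = 0, where S(B) = (B+Bᵀ)/2. -/
import Mathlib


open Matrix

/-- Symmetric part `S(A) = (A + Aᵀ)/2`. -/
noncomputable def Ssym {m : ℕ} (A : Matrix (Fin m) (Fin m) ℝ) : Matrix (Fin m) (Fin m) ℝ :=
  (1 / 2 : ℝ) • (A + Aᵀ)

/-- Commutator of matrices. -/
def brk {m : ℕ} (X Y : Matrix (Fin m) (Fin m) ℝ) : Matrix (Fin m) (Fin m) ℝ :=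
  X * Y - Y * X

/-- Squared norm `|X|² = tr (X Xᵀ)`. -/
noncomputable def nsq {m : ℕ} (X : Matrix (Fin m) (Fin m) ℝ) : ℝ :=
  (X * Xᵀ).trace

/-- The Ricci pinching functional of the almost-abelian solvmanifold attached to `A`:
`F(A) = (tr S(A)² + (tr A)²)² / (tr S(A)² (tr S(A)² + (tr A)²) + ¼|[A,Aᵀ]|²)`. -/
noncomputable def Fpinch {m : ℕ} (A : Matrix (Fin m) (Fin m) ℝ) : ℝ :=
  ((Ssym A * Ssym A).trace + A.trace ^ 2) ^ 2 /
    ((Ssym A * Ssym A).trace * ((Ssym A * Ssym A).trace + A.trace ^ 2)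
      + (1 / 4) * nsq (brk A Aᵀ))

lemma nsq_eq_sum {m : ℕ} (X : Matrix (Fin m) (Fin m) ℝ) :
    nsq X = ∑ i, ∑ j, (X i j)^2 := by
  simp [nsq, trace, mul_apply, diag, sq]

lemma nsq_nonneg {m : ℕ} (X : Matrix (Fin m) (Fin m) ℝ) : 0 ≤ nsq X := by
  rw [nsq_eq_sum]; positivity

lemma nsq_eq_zero {m : ℕ} (X : Matrix (Fin m) (Fin m) ℝ) : nsq X = 0 ↔ X = 0 := by
  rw [nsq_eq_sum]
  constructor
  · intro h
    ext i j
    have h1 : ∀ i ∈ Finset.univ, (0:ℝ) ≤ ∑ j, (X i j)^2 := by intros; positivity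
    have := (Finset.sum_eq_zero_iff_of_nonneg h1).mp h i (Finset.mem_univ i)
    have h2 : ∀ j ∈ Finset.univ, (0:ℝ) ≤ (X i j)^2 := by intros; positivity
    have := (Finset.sum_eq_zero_iff_of_nonneg h2).mp this j (Finset.mem_univ j)
    simpa [pow_eq_zero_iff] using this
  · intro h; simp [h]

lemma expand_nsq {m : ℕ} (X Y : Matrix (Fin m) (Fin m) ℝ) :
    nsq (X*Y - Y*X) = (X*Y*(Yᵀ*Xᵀ)).trace - (X*Y*(Xᵀ*Yᵀ)).trace
      - (Y*X*(Yᵀ*Xᵀ)).trace + (Y*X*(Xᵀ*Yᵀ)).trace := by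
  simp [nsq, transpose_sub, transpose_mul, mul_sub, sub_mul, trace_sub]
  ring

/-- For square real matrices `A, B` with `A` normal:
`|[Bᵀ,A]|² = |[B,A]|²`, hence `|[B,A]|² + ⟨[Bᵀ,A],[B,A]⟩ ≥ 0`, with equality iff
`[S(B),A] = 0`. Here `⟨X,Y⟩ = tr(XYᵀ)`. -/
theorem stmt_15 (m : ℕ) (A B : Matrix (Fin m) (Fin m) ℝ) (hA : A * Aᵀ = Aᵀ * A) :
    nsq (brk Bᵀ A) = nsq (brk B A) ∧
    0 ≤ nsq (brk B A) + (brk Bᵀ A * (brk B A)ᵀ).trace ∧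
    (nsq (brk B A) + (brk Bᵀ A * (brk B A)ᵀ).trace = 0 ↔ brk (Ssym B) A = 0) := by
  have e3 : (Bᵀ*A*(B*Aᵀ)).trace = (A*B*(Aᵀ*Bᵀ)).trace := by
    calc (Bᵀ*A*(B*Aᵀ)).trace
        = ((Bᵀ*A*B)*Aᵀ).trace := by congr 1; noncomm_ring
      _ = (Aᵀ*(Bᵀ*A*B)).trace := trace_mul_comm _ _
      _ = ((Aᵀ*Bᵀ*A)*B).trace := by congr 1; noncomm_ring
      _ = (B*(Aᵀ*Bᵀ*A)).trace := trace_mul_comm _ _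
      _ = ((B*Aᵀ*Bᵀ)*A).trace := by congr 1; noncomm_ring
      _ = (A*(B*Aᵀ*Bᵀ)).trace := trace_mul_comm _ _
      _ = (A*B*(Aᵀ*Bᵀ)).trace := by congr 1; noncomm_ring
  have e4 : (A*Bᵀ*(Aᵀ*B)).trace = (B*A*(Bᵀ*Aᵀ)).trace := by
    calc (A*Bᵀ*(Aᵀ*B)).trace
        = ((A*Bᵀ*(Aᵀ*B))ᵀ).trace := (trace_transpose _).symm
      _ = (Bᵀ*A*(B*Aᵀ)).trace := by congr 1; simp [transpose_mul]
      _ = (A*B*(Aᵀ*Bᵀ)).trace := e3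
      _ = ((B*A*(Bᵀ*Aᵀ))ᵀ).trace := by congr 1; simp [transpose_mul]
      _ = (B*A*(Bᵀ*Aᵀ)).trace := trace_transpose _
  have e1 : (Bᵀ*A*(Aᵀ*B)).trace = (A*B*(Bᵀ*Aᵀ)).trace := by
    calc (Bᵀ*A*(Aᵀ*B)).trace
        = (Bᵀ*(A*Aᵀ)*B).trace := by congr 1; noncomm_ring
      _ = (Bᵀ*(Aᵀ*A)*B).trace := by rw [hA]
      _ = ((Bᵀ*Aᵀ)*(A*B)).trace := by congr 1; noncomm_ring
      _ = (A*B*(Bᵀ*Aᵀ)).trace := trace_mul_comm _ _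
  have e2 : (A*Bᵀ*(B*Aᵀ)).trace = (B*A*(Aᵀ*Bᵀ)).trace := by
    calc (A*Bᵀ*(B*Aᵀ)).trace
        = ((A*(Bᵀ*B))*Aᵀ).trace := by congr 1; noncomm_ring
      _ = (Aᵀ*(A*(Bᵀ*B))).trace := trace_mul_comm _ _
      _ = ((Aᵀ*A)*(Bᵀ*B)).trace := by congr 1; noncomm_ring
      _ = ((A*Aᵀ)*(Bᵀ*B)).trace := by rw [hA]
      _ = ((Bᵀ*B)*(A*Aᵀ)).trace := trace_mul_comm _ _
      _ = ((Bᵀ*(B*A))*Aᵀ).trace := by congr 1; noncomm_ring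
      _ = (Aᵀ*(Bᵀ*(B*A))).trace := trace_mul_comm _ _
      _ = ((Aᵀ*Bᵀ)*(B*A)).trace := by congr 1; noncomm_ring
      _ = (B*A*(Aᵀ*Bᵀ)).trace := trace_mul_comm _ _
  have key : nsq (brk Bᵀ A) = nsq (brk B A) := by
    rw [brk, brk, expand_nsq, expand_nsq, transpose_transpose]
    rw [e1, e2, e3, e4]
    ring
  have hswap : (brk B A * (brk Bᵀ A)ᵀ).trace = (brk Bᵀ A * (brk B A)ᵀ).trace := by
    rw [← trace_transpose (brk B A * (brk Bᵀ A)ᵀ)]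
    simp [transpose_mul]
  have hsum : nsq (brk B A + brk Bᵀ A)
      = 2 * (nsq (brk B A) + (brk Bᵀ A * (brk B A)ᵀ).trace) := by
    simp only [nsq, transpose_add, add_mul, mul_add, trace_add] at *
    rw [hswap] at *
    linarith [key]
  have hS : brk (Ssym B) A = (1/2 : ℝ) • (brk B A + brk Bᵀ A) := by
    simp only [brk, Ssym, smul_add, add_mul, mul_add, smul_mul_assoc, mul_smul_comm]
    module
  refine ⟨key, ?_, ?_⟩
  · have := nsq_nonneg (brk B A + brk Bᵀ A)
    linarith [hsum]
  · constructor
    · intro h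
      have h0 : nsq (brk B A + brk Bᵀ A) = 0 := by rw [hsum, h]; ring
      rw [nsq_eq_zero] at h0
      rw [hS, h0, smul_zero]
    · intro h
      rw [hS] at h
      have h0 : brk B A + brk Bᵀ A = 0 := by
        have := congrArg (fun M => (2:ℝ) • M) h
        simpa [smul_smul] using this
      have hz : nsq (brk B A + brk Bᵀ A) = 0 := by rw [h0]; simp [nsq]
      linarith [hsum ▸ hz]
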